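/- Let L be a set of n ≥ 2 distinct non-vertical lines in the plane whose upper envelope contains a bounded edge (equivalently, the upper envelope has at least two vertices). Then the upper level of every maximum-level vertex of the arrangement of L is at most 2·log₂ n. Equivalently, the smallest index k₀ for which some vertex of the arrangement lies strictly above the k₀-upper level satisfies k₀ ≤ 2·log₂ n. -/

import Mathlib

open Finset
open scoped Classical

noncomputable section

/-- A non-vertical line `y = a x + b` in the plane is represented by the pair `(a, b)`;
a point is a pair `(x, y)`. -/
def evalLine (l : ℝ × ℝ) (x : ℝ) : ℝ := l.1 * x + l.2

/-- The line `l` passes strictly below the point `p`. -/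
def Below (l : ℝ × ℝ) (p : ℝ × ℝ) : Prop := evalLine l p.1 < p.2

/-- The line `l` passes strictly above the point `p`. -/
def Above (l : ℝ × ℝ) (p : ℝ × ℝ) : Prop := p.2 < evalLine l p.1

/-- The point `p` lies on the line `l`. -/
def OnLine (l : ℝ × ℝ) (p : ℝ × ℝ) : Prop := evalLine l p.1 = p.2

/-- The level of a point: number of lines of `L` strictly below it. -/
def levelCount (L : Finset (ℝ × ℝ)) (p : ℝ × ℝ) : ℕ :=
  (L.filter (fun l => Below l p)).card

/-- The upper level of a point: number of lines of `L` strictly above it. -/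
def upperCount (L : Finset (ℝ × ℝ)) (p : ℝ × ℝ) : ℕ :=
  (L.filter (fun l => Above l p)).card

/-- The number of lines of `L` passing through a point. -/
def throughCount (L : Finset (ℝ × ℝ)) (p : ℝ × ℝ) : ℕ :=
  (L.filter (fun l => OnLine l p)).card

/-- The value of the upper envelope of `L` at abscissa `x`. -/
def envVal (L : Finset (ℝ × ℝ)) (hL : L.Nonempty) (x : ℝ) : ℝ :=
  L.sup' hL (fun l => evalLine l x)

/-- A vertex of the upper envelope of `L`. -/
def EnvelopeVertex (L : Finset (ℝ × ℝ)) (hL : L.Nonempty) (p : ℝ × ℝ) : Prop :=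
  p.2 = envVal L hL p.1 ∧ 2 ≤ throughCount L p

/-!
Let `u` be the upper level of a maximum-level vertex `v`. Every vertex `w` has level at most
that of `v`, so at least `u + 2` lines pass through or above `w`: no vertex lies strictly above
the `(u + 1)`-upper level. Consequently, for `j ≤ u`, every vertex of the `j`-upper level is a
vertex of the `(j + 1)`-upper level, and between two consecutive vertices of the `j`-upper level
the `(j + 1)`-upper level has a vertex: otherwise both levels run along one line between them,
and a point where the two levels meet is a vertex. So the numbers `V_j` of vertices on the
`j`-upper level satisfy `V_{j+1} ≥ 2 V_j - 1`, and starting from the two envelope vertices,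
`V_{u+1} ≥ 2 ^ (u + 1) + 1`. As there are at most `n ^ 2` vertices, `u ≤ 2 log₂ n`.
-/

theorem two_mul_card_le_card_add_one_of_forall_exists_mem_Ioo {α : Type*} [LinearOrder α]
    {A B : Finset α} (hAB : A ⊆ B)
    (hgap : ∀ a₁ ∈ A, ∀ a₂ ∈ A, a₁ < a₂ → (∀ a ∈ A, a ∉ Set.Ioo a₁ a₂) →
      ∃ b ∈ B, b ∈ Set.Ioo a₁ a₂) :
    2 * #A ≤ #B + 1 := by
  induction A using Finset.induction_on_max generalizing B with
  | empty => simp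
  | insert a s hlt ih =>
    rw [card_insert_of_notMem fun h => (hlt a h).false]
    rcases s.eq_empty_or_nonempty with rfl | hs
    · have := card_pos.2 ⟨a, hAB (mem_insert_self a ∅)⟩
      simp only [Finset.card_empty]
      omega
    set a' := s.max' hs
    have ha' : a' ∈ s := max'_mem s hs
    obtain ⟨b, hb, hba', hba⟩ := hgap a' (mem_insert_of_mem ha') a (mem_insert_self a s)
      (hlt a' ha') fun x hx hxI => by
        rcases Finset.mem_insert.1 hx with rfl | hx
        · exact hxI.2.false
        · exact (le_max' s x hx).not_gt hxI.1
    have hs' : 2 * #s ≤ #{x ∈ B | x ≤ a'} + 1 := by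
      refine ih (fun x hx => mem_filter.2 ⟨hAB (mem_insert_of_mem hx), le_max' s x hx⟩) ?_
      intro a₁ h₁ a₂ h₂ h12 hg
      obtain ⟨c, hc, hcI⟩ := hgap a₁ (mem_insert_of_mem h₁) a₂ (mem_insert_of_mem h₂) h12
        fun x hx hxI => by
          rcases Finset.mem_insert.1 hx with rfl | hx
          · exact (hlt a₂ h₂).not_gt hxI.2
          · exact hg x hx hxI
      exact ⟨c, mem_filter.2 ⟨hc, hcI.2.le.trans (le_max' s a₂ h₂)⟩, hcI⟩
    have hB : #(insert a (insert b {x ∈ B | x ≤ a'})) ≤ #B :=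
      card_le_card <|
        insert_subset (hAB (mem_insert_self a s)) (insert_subset hb (filter_subset _ _))
    rw [card_insert_of_notMem, card_insert_of_notMem] at hB
    · omega
    · simp only [mem_filter, not_and, not_le]; exact fun _ => hba'
    · simp only [Finset.mem_insert, mem_filter, not_or, not_and, not_le]
      exact ⟨hba.ne', fun _ => hlt a' ha'⟩

theorem eqOn_Icc_of_eqOn_Ioo {α β : Type*} [TopologicalSpace α] [LinearOrder α] [OrderTopology α]
    [DenselyOrdered α] [TopologicalSpace β] [T2Space β] {f g : α → β} {a b : α}
    (hf : Continuous f) (hg : Continuous g) (hab : a < b) (h : Set.EqOn f g (Set.Ioo a b)) :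
    Set.EqOn f g (Set.Icc a b) := by
  simpa only [closure_Ioo hab.ne] using h.closure hf hg

theorem le_two_mul_logb_two_of_two_pow_le_sq {m n : ℕ} (h : 2 ^ m ≤ n ^ 2) :
    (m : ℝ) ≤ 2 * Real.logb 2 n := by
  have hn : (0 : ℝ) < (n : ℝ) ^ 2 := by
    have : 0 < n ^ 2 := lt_of_lt_of_le (by positivity) h
    exact_mod_cast this
  have hlog : Real.logb 2 ((n : ℝ) ^ 2) = 2 * Real.logb 2 n := by simp [Real.logb_pow]
  rw [← hlog, Real.le_logb_iff_rpow_le one_lt_two hn, Real.rpow_natCast]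
  exact_mod_cast h

theorem continuous_evalLine (l : ℝ × ℝ) : Continuous (evalLine l) := by
  unfold evalLine; fun_prop

theorem eq_of_evalLine_eq {l₁ l₂ : ℝ × ℝ} {x₁ x₂ : ℝ} (hx : x₁ ≠ x₂)
    (h₁ : evalLine l₁ x₁ = evalLine l₂ x₁) (h₂ : evalLine l₁ x₂ = evalLine l₂ x₂) : l₁ = l₂ := by
  simp only [evalLine] at h₁ h₂
  have hslope : l₁.1 = l₂.1 := by
    have : (l₁.1 - l₂.1) * (x₁ - x₂) = 0 := by linear_combination h₁ - h₂
    exact sub_eq_zero.1 ((mul_eq_zero.1 this).resolve_right (sub_ne_zero.2 hx))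
  exact Prod.ext hslope (by rw [hslope] at h₁; linarith)

section Counting

variable {L : Finset (ℝ × ℝ)} {p : ℝ × ℝ}

theorem two_le_throughCount {l₁ l₂ : ℝ × ℝ} (h₁ : l₁ ∈ L) (h₂ : l₂ ∈ L) (hne : l₁ ≠ l₂)
    (hp₁ : OnLine l₁ p) (hp₂ : OnLine l₂ p) : 2 ≤ throughCount L p := by
  rw [← card_pair hne]
  exact card_le_card (insert_subset (mem_filter.2 ⟨h₁, hp₁⟩)
    (singleton_subset_iff.2 (mem_filter.2 ⟨h₂, hp₂⟩)))

theorem upperCount_add_throughCount (L : Finset (ℝ × ℝ)) (p : ℝ × ℝ) :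
    upperCount L p + throughCount L p = #{l ∈ L | p.2 ≤ evalLine l p.1} := by
  rw [upperCount, throughCount, ← card_union_of_disjoint, ← filter_or]
  · simp only [Above, OnLine, le_iff_lt_or_eq, eq_comm]
  · exact disjoint_filter.2 fun l _ hlt heq => (ne_of_lt hlt) heq.symm

theorem levelCount_add_upperCount_add_throughCount (L : Finset (ℝ × ℝ)) (p : ℝ × ℝ) :
    levelCount L p + (upperCount L p + throughCount L p) = #L := by
  rw [upperCount_add_throughCount, levelCount, ← card_filter_add_card_filter_not
    (s := L) (fun l => Below l p)]
  simp only [Below, not_lt]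

theorem upperCount_add_throughCount_le (L : Finset (ℝ × ℝ)) (p : ℝ × ℝ) :
    upperCount L p + throughCount L p ≤ #L := by
  have := levelCount_add_upperCount_add_throughCount L p
  omega

end Counting

def intersectionPoint (l₁ l₂ : ℝ × ℝ) : ℝ × ℝ :=
  ((l₂.2 - l₁.2) / (l₁.1 - l₂.1), evalLine l₁ ((l₂.2 - l₁.2) / (l₁.1 - l₂.1)))

def vertices (L : Finset (ℝ × ℝ)) : Finset (ℝ × ℝ) :=
  {p ∈ L.offDiag.image fun q => intersectionPoint q.1 q.2 | 2 ≤ throughCount L p}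

section Vertices

variable {L : Finset (ℝ × ℝ)} {p : ℝ × ℝ}

theorem mem_vertices : p ∈ vertices L ↔ 2 ≤ throughCount L p := by
  refine ⟨fun h => (mem_filter.1 h).2, fun h => mem_filter.2 ⟨?_, h⟩⟩
  obtain ⟨l₁, hl₁, l₂, hl₂, hne⟩ := one_lt_card.1 h
  obtain ⟨hl₁, hp₁⟩ := mem_filter.1 hl₁
  obtain ⟨hl₂, hp₂⟩ := mem_filter.1 hl₂
  simp only [OnLine, evalLine] at hp₁ hp₂
  have hslope : l₁.1 - l₂.1 ≠ 0 := by
    intro hs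
    have hs : l₁.1 = l₂.1 := by linarith
    rw [hs] at hp₁
    exact hne (Prod.ext hs (by linarith))
  have hx : (l₂.2 - l₁.2) / (l₁.1 - l₂.1) = p.1 := by
    rw [div_eq_iff hslope]; linarith
  refine mem_image.2 ⟨(l₁, l₂), mem_offDiag.2 ⟨hl₁, hl₂, hne⟩, ?_⟩
  simp only [intersectionPoint, hx]
  exact Prod.ext rfl hp₁

theorem card_vertices_le (L : Finset (ℝ × ℝ)) : #(vertices L) ≤ #L * #L :=
  calc #(vertices L) ≤ #L.offDiag := (card_filter_le _ _).trans card_image_le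
    _ ≤ #L * #L := by rw [offDiag_card]; exact Nat.sub_le _ _

theorem evalLine_lt_iff_of_forall_vertices_notMem {a b : ℝ}
    (hno : ∀ w ∈ vertices L, w.1 ∉ Set.Ioo a b) {l l' : ℝ × ℝ} (hl : l ∈ L) (hl' : l' ∈ L)
    {x x' : ℝ} (hx : x ∈ Set.Ioo a b) (hx' : x' ∈ Set.Ioo a b) :
    evalLine l x < evalLine l' x ↔ evalLine l x' < evalLine l' x' := by
  suffices h : ∀ {x x'}, x ∈ Set.Ioo a b → x' ∈ Set.Ioo a b →
      evalLine l x < evalLine l' x → evalLine l x' < evalLine l' x' from ⟨h hx hx', h hx' hx⟩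
  intro x x' hx hx' h
  by_contra! h'
  have hne : l ≠ l' := by rintro rfl; exact h.false
  obtain ⟨t, ht, ht0⟩ := isPreconnected_Ioo.intermediate_value
    (f := fun t => evalLine l' t - evalLine l t) hx' hx
    ((continuous_evalLine l').sub (continuous_evalLine l)).continuousOn
    (show (0 : ℝ) ∈ Set.Icc _ _ from ⟨by linarith, by linarith⟩)
  exact hno _ (mem_vertices.2 (two_le_throughCount (p := (t, evalLine l t)) hl hl' hne rfl
    (sub_eq_zero.1 ht0))) ht

end Vertices

/-- The value at `x` of the `k`-upper level: the `(k + 1)`-st largest of the values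
`evalLine l x`, written as a maximum over `(k + 1)`-subsets of `L` of their minimum value. -/
def upperLevel (L : Finset (ℝ × ℝ)) (k : ℕ) (x : ℝ) : ℝ :=
  if h : k + 1 ≤ #L then
    (L.powersetCard (k + 1)).attach.sup' (by simpa using h) fun S =>
      S.1.inf' (card_pos.1 (by rw [(mem_powersetCard.1 S.2).2]; omega)) (evalLine · x)
  else 0

def OnUpperLevel (L : Finset (ℝ × ℝ)) (k : ℕ) (p : ℝ × ℝ) : Prop := upperLevel L k p.1 = p.2

section UpperLevel

variable {L : Finset (ℝ × ℝ)} {k : ℕ} {x y : ℝ} {p : ℝ × ℝ}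

theorem le_upperLevel_of_mem_powersetCard {S : Finset (ℝ × ℝ)} (hS : S ∈ L.powersetCard (k + 1))
    (h : ∀ l ∈ S, y ≤ evalLine l x) : y ≤ upperLevel L k x := by
  have hk : k + 1 ≤ #L := (mem_powersetCard.1 hS).2 ▸ card_le_card (mem_powersetCard.1 hS).1
  rw [upperLevel, dif_pos hk]
  exact (le_inf'_iff _ _).2 h |>.trans (le_sup' (fun S : L.powersetCard (k + 1) => S.1.inf' _
    (evalLine · x)) (mem_attach _ ⟨S, hS⟩))

theorem exists_mem_powersetCard_upperLevel_le (hk : k + 1 ≤ #L) :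
    ∃ S ∈ L.powersetCard (k + 1), ∀ l ∈ S, upperLevel L k x ≤ evalLine l x := by
  rw [upperLevel, dif_pos hk]
  obtain ⟨S, -, hS⟩ := exists_mem_eq_sup' (s := (L.powersetCard (k + 1)).attach)
    (by simpa using hk) fun S : L.powersetCard (k + 1) =>
    S.1.inf' (card_pos.1 (by rw [(mem_powersetCard.1 S.2).2]; omega)) (evalLine · x)
  exact ⟨S.1, S.2, fun l hl => hS ▸ inf'_le _ hl⟩

theorem upperLevel_le (hk : k + 1 ≤ #L) (h : #{l ∈ L | y < evalLine l x} ≤ k) :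
    upperLevel L k x ≤ y := by
  obtain ⟨S, hS, hSle⟩ := exists_mem_powersetCard_upperLevel_le (x := x) hk
  obtain ⟨hSL, hScard⟩ := mem_powersetCard.1 hS
  obtain ⟨l, hl, hly⟩ : ∃ l ∈ S, l ∉ {l ∈ L | y < evalLine l x} :=
    not_subset.1 fun hsub => by have := card_le_card hsub; omega
  exact (hSle l hl).trans (not_lt.1 fun hlt => hly (mem_filter.2 ⟨hSL hl, hlt⟩))

theorem le_upperLevel (h : k + 1 ≤ #{l ∈ L | y ≤ evalLine l x}) : y ≤ upperLevel L k x := by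
  obtain ⟨S, hS, hcard⟩ := exists_subset_card_eq h
  exact le_upperLevel_of_mem_powersetCard
    (mem_powersetCard.2 ⟨hS.trans (filter_subset _ _), hcard⟩) fun l hl => (mem_filter.1 (hS hl)).2

theorem succ_le_card_upperLevel_le (hk : k + 1 ≤ #L) :
    k + 1 ≤ #{l ∈ L | upperLevel L k x ≤ evalLine l x} := by
  obtain ⟨S, hS, hSle⟩ := exists_mem_powersetCard_upperLevel_le (x := x) hk
  obtain ⟨hSL, hScard⟩ := mem_powersetCard.1 hS
  exact hScard ▸ card_le_card fun l hl => mem_filter.2 ⟨hSL hl, hSle l hl⟩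

theorem card_upperLevel_lt_le : #{l ∈ L | upperLevel L k x < evalLine l x} ≤ k := by
  by_contra! hcard
  obtain ⟨S, hS, hScard⟩ := exists_subset_card_eq (Nat.succ_le_of_lt hcard)
  have hne : S.Nonempty := card_pos.1 (by omega)
  have hle := le_upperLevel_of_mem_powersetCard (y := S.inf' hne (evalLine · x))
    (mem_powersetCard.2 ⟨hS.trans (filter_subset _ _), hScard⟩) fun l hl => inf'_le _ hl
  exact hle.not_gt ((lt_inf'_iff hne).2 fun l hl => (mem_filter.1 (hS hl)).2)

theorem upperLevel_eq_iff (hk : k + 1 ≤ #L) :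
    upperLevel L k x = y ↔
      #{l ∈ L | y < evalLine l x} ≤ k ∧ k + 1 ≤ #{l ∈ L | y ≤ evalLine l x} := by
  constructor
  · rintro rfl
    exact ⟨card_upperLevel_lt_le, succ_le_card_upperLevel_le hk⟩
  · rintro ⟨hlt, hle⟩
    exact (upperLevel_le hk hlt).antisymm (le_upperLevel hle)

theorem exists_evalLine_eq_upperLevel (hk : k + 1 ≤ #L) :
    ∃ l ∈ L, evalLine l x = upperLevel L k x := by
  by_contra! hne
  have hle := succ_le_card_upperLevel_le (x := x) hk
  rw [filter_congr fun l hl => (le_iff_lt_or_eq.trans (or_iff_left (hne l hl).symm))] at hle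
  exact (card_upperLevel_lt_le (L := L)).not_gt hle

theorem continuous_upperLevel : Continuous (upperLevel L k) := by
  unfold upperLevel
  split_ifs
  · exact Continuous.finset_sup'_apply _ fun S _ =>
      Continuous.finset_inf'_apply _ fun l _ => continuous_evalLine l
  · exact continuous_const

theorem onUpperLevel_iff (hk : k + 1 ≤ #L) :
    OnUpperLevel L k p ↔ upperCount L p ≤ k ∧ k + 1 ≤ upperCount L p + throughCount L p := by
  rw [upperCount_add_throughCount]
  exact upperLevel_eq_iff hk

theorem OnUpperLevel.succ (h : OnUpperLevel L k p)
    (hp : k + 2 ≤ upperCount L p + throughCount L p) : OnUpperLevel L (k + 1) p := by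
  have hL := upperCount_add_throughCount_le L p
  have := ((onUpperLevel_iff (by omega)).1 h).1
  exact (onUpperLevel_iff (by omega)).2 ⟨by omega, hp⟩

theorem two_le_throughCount_of_onUpperLevel (hk : k + 2 ≤ #L) (h : OnUpperLevel L k p)
    (h' : OnUpperLevel L (k + 1) p) : 2 ≤ throughCount L p := by
  have := ((onUpperLevel_iff (by omega)).1 h).1
  have := ((onUpperLevel_iff hk).1 h').2
  omega

theorem EnvelopeVertex.onUpperLevel_zero {hL : L.Nonempty} (hp : EnvelopeVertex L hL p) :
    OnUpperLevel L 0 p := by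
  refine (onUpperLevel_iff (card_pos.2 hL)).2 ⟨?_, by have := hp.2; omega⟩
  refine (card_eq_zero.2 (filter_eq_empty_iff.2 fun l hl hlt => ?_)).le
  rw [Above, hp.1] at hlt
  exact (le_sup' (evalLine · p.1) hl).not_gt hlt

end UpperLevel

section Levels

variable {L : Finset (ℝ × ℝ)} {k : ℕ} {a b : ℝ}

theorem exists_eqOn_upperLevel_of_forall_vertices_notMem (hk : k + 1 ≤ #L) (hab : a < b)
    (hno : ∀ w ∈ vertices L, w.1 ∉ Set.Ioo a b) :
    ∃ l ∈ L, Set.EqOn (upperLevel L k) (evalLine l) (Set.Ioo a b) := by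
  have hm : (a + b) / 2 ∈ Set.Ioo a b := ⟨by linarith, by linarith⟩
  obtain ⟨l₀, hl₀, he⟩ := exists_evalLine_eq_upperLevel (x := (a + b) / 2) hk
  obtain ⟨hlt, hle⟩ := (upperLevel_eq_iff hk).1 he.symm
  refine ⟨l₀, hl₀, fun x hx => (upperLevel_eq_iff hk).2 ⟨?_, ?_⟩⟩
  · rwa [filter_congr fun l hl => evalLine_lt_iff_of_forall_vertices_notMem hno hl₀ hl hx hm]
  · rwa [filter_congr fun l hl => by
      simpa only [not_lt] using (evalLine_lt_iff_of_forall_vertices_notMem hno hl hl₀ hx hm).not]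

-- Induct on the number of vertices in the strip and split it at the abscissa of one of them:
-- if the two pieces of the level lay on different lines, they would meet in a vertex of the
-- `k`-upper level.
theorem exists_eqOn_upperLevel (hk : k + 1 ≤ #L) (hab : a < b)
    (hno : ∀ w ∈ vertices L, OnUpperLevel L k w → w.1 ∉ Set.Ioo a b) :
    ∃ l ∈ L, Set.EqOn (upperLevel L k) (evalLine l) (Set.Ioo a b) := by
  induction hN : #{w ∈ vertices L | w.1 ∈ Set.Ioo a b} using Nat.strong_induction_on
    generalizing a b with
  | _ N ih =>
    by_cases hv : ∃ w ∈ vertices L, w.1 ∈ Set.Ioo a b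
    swap
    · push Not at hv
      exact exists_eqOn_upperLevel_of_forall_vertices_notMem hk hab hv
    obtain ⟨w, hw, hac, hcb⟩ := hv
    have hfewer : ∀ a' b', Set.Ioo a' b' ⊆ Set.Ioo a b → w.1 ∉ Set.Ioo a' b' →
        #{w ∈ vertices L | w.1 ∈ Set.Ioo a' b'} < N := fun a' b' hsub hw' =>
      hN ▸ card_lt_card ⟨monotone_filter_right _ fun _ _ h => hsub h,
        not_subset.2 ⟨w, mem_filter.2 ⟨hw, hac, hcb⟩, fun h => hw' (mem_filter.1 h).2⟩⟩
    obtain ⟨l₁, hl₁, h₁⟩ :=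
      ih _ (hfewer a w.1 (Set.Ioo_subset_Ioo_right hcb.le) (fun h => h.2.false))
      hac (fun v hv hvk hva => hno v hv hvk ⟨hva.1, hva.2.trans hcb⟩) rfl
    obtain ⟨l₂, hl₂, h₂⟩ :=
      ih _ (hfewer w.1 b (Set.Ioo_subset_Ioo_left hac.le) (fun h => h.1.false))
      hcb (fun v hv hvk hvb => hno v hv hvk ⟨hac.trans hvb.1, hvb.2⟩) rfl
    have h₁' := eqOn_Icc_of_eqOn_Ioo continuous_upperLevel (continuous_evalLine l₁) hac h₁
    have h₂' := eqOn_Icc_of_eqOn_Ioo continuous_upperLevel (continuous_evalLine l₂) hcb h₂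
    obtain rfl : l₁ = l₂ := by
      by_contra hne
      exact hno _ (mem_vertices.2 (two_le_throughCount (p := (w.1, upperLevel L k w.1)) hl₁ hl₂ hne
        (h₁' ⟨hac.le, le_rfl⟩).symm (h₂' ⟨le_rfl, hcb.le⟩).symm)) rfl ⟨hac, hcb⟩
    exact ⟨l₁, hl₁, (h₁.union h₂').mono fun x hx =>
      (lt_or_ge x w.1).imp (fun h => ⟨hx.1, h⟩) (fun h => ⟨h, hx.2.le⟩)⟩

theorem exists_mem_vertices_onUpperLevel_succ_mem_Ioo (hk : k + 2 ≤ #L) {p₁ p₂ : ℝ × ℝ}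
    (hp₁ : OnUpperLevel L k p₁) (hp₁' : OnUpperLevel L (k + 1) p₁)
    (hp₂ : OnUpperLevel L k p₂) (hp₂' : OnUpperLevel L (k + 1) p₂) (h12 : p₁.1 < p₂.1)
    (hno : ∀ w ∈ vertices L, OnUpperLevel L k w → w.1 ∉ Set.Ioo p₁.1 p₂.1) :
    ∃ w ∈ vertices L, OnUpperLevel L (k + 1) w ∧ w.1 ∈ Set.Ioo p₁.1 p₂.1 := by
  by_contra! hno'
  obtain ⟨l, -, hl⟩ := exists_eqOn_upperLevel (by omega) h12 hno
  obtain ⟨l', -, hl'⟩ := exists_eqOn_upperLevel hk h12 hno'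
  have hlI := eqOn_Icc_of_eqOn_Ioo continuous_upperLevel (continuous_evalLine l) h12 hl
  have hlI' := eqOn_Icc_of_eqOn_Ioo continuous_upperLevel (continuous_evalLine l') h12 hl'
  obtain rfl : l = l' := eq_of_evalLine_eq h12.ne
    (by rw [← hlI ⟨le_rfl, h12.le⟩, ← hlI' ⟨le_rfl, h12.le⟩, hp₁, hp₁'])
    (by rw [← hlI ⟨h12.le, le_rfl⟩, ← hlI' ⟨h12.le, le_rfl⟩, hp₂, hp₂'])
  have hm : (p₁.1 + p₂.1) / 2 ∈ Set.Ioo p₁.1 p₂.1 := ⟨by linarith, by linarith⟩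
  have hmeet : OnUpperLevel L k ((p₁.1 + p₂.1) / 2, upperLevel L (k + 1) ((p₁.1 + p₂.1) / 2)) :=
    (hl hm).trans (hl' hm).symm
  exact hno' _ (mem_vertices.2 (two_le_throughCount_of_onUpperLevel hk hmeet rfl)) rfl hm

theorem two_mul_card_onUpperLevel_le (hk : k + 2 ≤ #L)
    (hsub : ∀ w ∈ vertices L, OnUpperLevel L k w → OnUpperLevel L (k + 1) w) :
    2 * #{w ∈ vertices L | OnUpperLevel L k w}
      ≤ #{w ∈ vertices L | OnUpperLevel L (k + 1) w} + 1 := by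
  have hinj : ∀ j, Set.InjOn Prod.fst ((vertices L).filter (OnUpperLevel L j) : Set (ℝ × ℝ)) :=
    fun j p hp q hq hpq => Prod.ext hpq <| by
      rw [← (mem_filter.1 (mem_coe.1 hp)).2, ← (mem_filter.1 (mem_coe.1 hq)).2, hpq]
  rw [← card_image_of_injOn (hinj k), ← card_image_of_injOn (hinj (k + 1))]
  refine two_mul_card_le_card_add_one_of_forall_exists_mem_Ioo
    (image_subset_image fun w hw => ?_) ?_
  · obtain ⟨hwV, hwk⟩ := mem_filter.1 hw
    exact mem_filter.2 ⟨hwV, hsub w hwV hwk⟩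
  intro a₁ ha₁ a₂ ha₂ h12 hgap
  obtain ⟨p₁, hp₁, rfl⟩ := mem_image.1 ha₁
  obtain ⟨p₂, hp₂, rfl⟩ := mem_image.1 ha₂
  obtain ⟨hv₁, hk₁⟩ := mem_filter.1 hp₁
  obtain ⟨hv₂, hk₂⟩ := mem_filter.1 hp₂
  obtain ⟨w, hw, hwk, hwI⟩ := exists_mem_vertices_onUpperLevel_succ_mem_Ioo hk hk₁ (hsub _ hv₁ hk₁)
    hk₂ (hsub _ hv₂ hk₂) h12 fun w hw hwk => hgap w.1 (mem_image_of_mem _ (mem_filter.2 ⟨hw, hwk⟩))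
  exact ⟨w.1, mem_image_of_mem _ (mem_filter.2 ⟨hw, hwk⟩), hwI⟩

theorem two_pow_add_one_le_card_onUpperLevel {hL : L.Nonempty}
    (henv : ∃ p q : ℝ × ℝ, p ≠ q ∧ EnvelopeVertex L hL p ∧ EnvelopeVertex L hL q) (j : ℕ)
    (hj : ∀ w ∈ vertices L, j + 1 ≤ upperCount L w + throughCount L w) :
    2 ^ j + 1 ≤ #{w ∈ vertices L | OnUpperLevel L j w} := by
  obtain ⟨p, q, hpq, hp, hq⟩ := henv
  induction j with
  | zero =>
    rw [pow_zero, one_add_one_eq_two, ← card_pair hpq]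
    exact card_le_card (insert_subset (mem_filter.2 ⟨mem_vertices.2 hp.2, hp.onUpperLevel_zero⟩)
      (singleton_subset_iff.2 (mem_filter.2 ⟨mem_vertices.2 hq.2, hq.onUpperLevel_zero⟩)))
  | succ j ih =>
    have hk : j + 2 ≤ #L :=
      (hj p (mem_vertices.2 hp.2)).trans (upperCount_add_throughCount_le L p)
    have hV := ih fun w hw => (Nat.le_succ _).trans (hj w hw)
    have hdouble := two_mul_card_onUpperLevel_le hk fun w hw hwj => hwj.succ (hj w hw)
    rw [pow_succ]
    omega

end Levels

theorem stmt6_general (L : Finset (ℝ × ℝ)) (n : ℕ) (hn : L.card = n)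
    (hL : L.Nonempty)
    (henv : ∃ p q : ℝ × ℝ, p ≠ q ∧ EnvelopeVertex L hL p ∧ EnvelopeVertex L hL q)
    (v : ℝ × ℝ) (hv : 2 ≤ throughCount L v)
    (hmax : ∀ w : ℝ × ℝ, 2 ≤ throughCount L w → levelCount L w ≤ levelCount L v) :
    (upperCount L v : ℝ) ≤ 2 * Real.logb 2 n := by
  have hfull : ∀ w ∈ vertices L, upperCount L v + 1 + 1 ≤ upperCount L w + throughCount L w := by
    intro w hw
    have := hmax w (mem_vertices.1 hw)
    have := levelCount_add_upperCount_add_throughCount L w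
    have := levelCount_add_upperCount_add_throughCount L v
    omega
  have hgrowth := two_pow_add_one_le_card_onUpperLevel henv _ hfull
  have hV : #{w ∈ vertices L | OnUpperLevel L (upperCount L v + 1) w} ≤ #L * #L :=
    (card_filter_le _ _).trans (card_vertices_le L)
  refine le_two_mul_logb_two_of_two_pow_le_sq ?_
  calc 2 ^ upperCount L v ≤ 2 ^ (upperCount L v + 1) := Nat.pow_le_pow_right two_pos (by omega)
    _ ≤ n ^ 2 := by rw [sq, ← hn]; omega

theorem stmt6 (L : Finset (ℝ × ℝ)) (n : ℕ) (hn : L.card = n) (hn2 : 2 ≤ n)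
    (hL : L.Nonempty)
    (henv : ∃ p q : ℝ × ℝ, p ≠ q ∧ EnvelopeVertex L hL p ∧ EnvelopeVertex L hL q)
    (v : ℝ × ℝ) (hv : 2 ≤ throughCount L v)
    (hmax : ∀ w : ℝ × ℝ, 2 ≤ throughCount L w → levelCount L w ≤ levelCount L v) :
    (upperCount L v : ℝ) ≤ 2 * Real.logb 2 n :=
  stmt6_general L n hn hL henv v hv hmax
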